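/- The map ρ₁^β : ℙ₁ → (ℙ₁)^β↾(κ+1) is a projection of forcing posets: it is order-preserving and surjective, maps the empty condition to the empty condition, and for every p ∈ ℙ₁ and every q ∈ (ℙ₁)^β↾(κ+1) with q ≤ ρ₁^β(p), there exists p′ ∈ ℙ₁ with p′ ≤₁ p and ρ₁^β(p′) ≤ q. -/

import Mathlib

noncomputable section

open Classical

/-- Ordinals (in the base universe). -/
abbrev Ord0 : Type 1 := Ordinal.{0}
/-- Cardinals (in the base universe). -/
abbrev Card0 : Type 1 := Cardinal.{0}

/-- Vertices of trees: pairs (κ, i) of a cardinal (the level) and an ordinal (the index). -/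
abbrev Vertex : Type 1 := Card0 × Ord0

/-- κ is a successor cardinal. -/
def IsSuccCard (κ : Card0) : Prop := ∃ μ : Card0, Cardinal.aleph0 ≤ μ ∧ κ = Order.succ μ

/-- κ is an (infinite) limit cardinal. -/
def IsLimitCard (κ : Card0) : Prop := Cardinal.aleph0 ≤ κ ∧ ¬ IsSuccCard κ

/-- The modified function F_lim. -/
def FlimOf (F : Card0 → Card0) (κ : Card0) : Card0 :=
  if κ < Cardinal.aleph Ordinal.omega0 then F Cardinal.aleph0
  else if IsLimitCard κ then F κ
  else F (sSup {lam : Card0 | lam < κ ∧ IsLimitCard lam})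

/-- A set (of objects living in `Type 1`) has cardinality < κ. -/
def SetCardLT {α : Type 1} (S : Set α) (κ : Card0) : Prop :=
  Cardinal.mk ↥S < Cardinal.lift.{1} κ

/-- Raw data for conditions in ℙ₀: a set of vertices, a binary relation on vertices and
a valuation assigning to each vertex a partial 0-1-function on ordinals. -/
structure RawP0 : Type 1 where
  verts : Set Vertex
  le : Vertex → Vertex → Prop
  val : Vertex → Ord0 → Option Bool

/-- Domain of the partial function attached to vertex v. -/
def dom0 (p : RawP0) (v : Vertex) : Set Ord0 := {ζ | p.val v ζ ≠ none}

/-- (t, le) is an F_lim-tree. -/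
def IsFlimTree (Flim : Card0 → Card0) (t : Set Vertex) (le : Vertex → Vertex → Prop) : Prop :=
  (∀ v ∈ t, (v.1 = 0 ∧ v.2 = 0) ∨ (Cardinal.aleph0 ≤ v.1 ∧ v.2 < (Flim v.1).ord)) ∧
  (∀ a b, le a b → a ∈ t ∧ b ∈ t) ∧
  (∀ v ∈ t, le v v) ∧
  (∀ a b c, le a b → le b c → le a c) ∧
  (∀ a b, le a b → le b a → a = b) ∧
  (∀ a b, le a b → a.1 ≤ b.1) ∧
  (∀ b ∈ t, ∀ κ : Card0, (κ = 0 ∨ Cardinal.aleph0 ≤ κ) → κ < b.1 →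
      ∃! i : Ord0, (κ, i) ∈ t ∧ le (κ, i) b) ∧
  (∃ M : Finset Vertex, ↑M ⊆ t ∧ ∀ v ∈ t, ∃ m ∈ M, le v m) ∧
  (∀ κ : Card0, IsLimitCard κ → Cardinal.aleph0 < κ → ∀ i i' : Ord0,
      (κ, i) ∈ t → (κ, i') ∈ t →
      ({w | le w (κ, i) ∧ w ≠ (κ, i)} = {w | le w (κ, i') ∧ w ≠ (κ, i')}) → i = i')

/-- p is a condition of the forcing ℙ₀. -/
def IsP0 (F : Card0 → Card0) (p : RawP0) : Prop :=
  IsFlimTree (FlimOf F) p.verts p.le ∧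
  (∀ v, v ∉ p.verts → ∀ ζ, p.val v ζ = none) ∧
  (∀ v ∈ p.verts, ∀ μ : Card0, Cardinal.aleph0 ≤ μ → v.1 = Order.succ μ →
      (∀ ζ ∈ dom0 p v, μ.ord ≤ ζ ∧ ζ < v.1.ord) ∧ SetCardLT (dom0 p v) v.1) ∧
  (∀ v ∈ p.verts, v.1 = Cardinal.aleph0 →
      (∀ ζ ∈ dom0 p v, ζ < Cardinal.aleph0.ord) ∧ (dom0 p v).Finite) ∧
  (∀ v ∈ p.verts, (v.1 = 0 ∨ (IsLimitCard v.1 ∧ Cardinal.aleph0 < v.1)) →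
      ∀ ζ, p.val v ζ = none) ∧
  (∀ v ∈ p.verts, IsLimitCard v.1 → (v.1).IsRegular →
      SetCardLT {ζ : Ord0 | ∃ w, w ∈ p.verts ∧ IsSuccCard w.1 ∧ p.le w v ∧ ζ ∈ dom0 p w} v.1)

/-- t(q) extends t(p) as an F_lim-tree. -/
def treeLe (q p : RawP0) : Prop :=
  p.verts ⊆ q.verts ∧ ∀ a b, p.le a b → q.le a b

/-- The partial order ≤₀ on conditions of ℙ₀. -/
def le0 (q p : RawP0) : Prop :=
  treeLe q p ∧ ∀ v ∈ p.verts, ∀ ζ b, p.val v ζ = some b → q.val v ζ = some b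

/-- The class of conditions of ℙ₀. -/
def P0set (F : Card0 → Card0) : Set RawP0 := {p | IsP0 F p}

/-- Compatibility with common extension in a given subclass S. -/
def Compat0In (S : Set RawP0) (p q : RawP0) : Prop := ∃ r ∈ S, le0 r p ∧ le0 r q

/-- Compatibility in ℙ₀. -/
def Compat0 (F : Card0 → Card0) (p q : RawP0) : Prop := Compat0In (P0set F) p q

/-- The height of p is at most lam. -/
def heightLE (p : RawP0) (lam : Card0) : Prop := ∀ v ∈ p.verts, v.1 ≤ lam

/-- Raw data for conditions in ℙ₁: for each (successor) cardinal a partial 0-1-function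
on pairs (ζ, i). -/
abbrev P1Raw : Type 1 := Card0 → Ord0 × Ord0 → Option Bool

/-- Domain of the column at κ. -/
def dom1 (p : P1Raw) (κ : Card0) : Set (Ord0 × Ord0) := {x | p κ x ≠ none}

/-- Support of a condition of ℙ₁. -/
def supp1 (p : P1Raw) : Set Card0 := {κ | ∃ x, p κ x ≠ none}

/-- Succ′: successor cardinals κ⁺ with F(κ⁺) > F(ν⁺) for all successor cardinals ν⁺ < κ⁺. -/
def SuccPrime (F : Card0 → Card0) (κ : Card0) : Prop :=
  IsSuccCard κ ∧ ∀ ν, IsSuccCard ν → ν < κ → F ν < F κ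

/-- p is a condition of the forcing ℙ₁. -/
def IsP1 (F : Card0 → Card0) (p : P1Raw) : Prop :=
  (supp1 p).Finite ∧
  (∀ κ ∈ supp1 p, SuccPrime F κ) ∧
  (∀ κ ∈ supp1 p, ∀ μ : Card0, Cardinal.aleph0 ≤ μ → κ = Order.succ μ →
    (∀ x ∈ dom1 p κ, μ.ord ≤ x.1 ∧ x.1 < κ.ord ∧ x.2 < (F κ).ord) ∧
    SetCardLT (dom1 p κ) κ ∧
    (∀ x y, x ∈ dom1 p κ → y ∈ dom1 p κ → (x.1, y.2) ∈ dom1 p κ))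

/-- The partial order ≤₁ on conditions of ℙ₁ (reverse inclusion). -/
def le1 (q p : P1Raw) : Prop := ∀ κ x b, p κ x = some b → q κ x = some b

/-- The class of conditions of ℙ₁. -/
def P1set (F : Card0 → Card0) : Set P1Raw := {p | IsP1 F p}

/-- Compatibility with common extension in a given subclass S. -/
def Compat1In (S : Set P1Raw) (p q : P1Raw) : Prop := ∃ r ∈ S, le1 r p ∧ le1 r q

/-- Compatibility in ℙ₁. -/
def Compat1 (F : Card0 → Card0) (p q : P1Raw) : Prop := Compat1In (P1set F) p q

/-- The restriction p↾{(κ̄₀,ī₀),…}: keep, in each column κ̄_l, only the entries with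
second coordinate ī_l. -/
def restr1 (S : Set (Card0 × Ord0)) (p : P1Raw) : P1Raw :=
  fun κ x => if (κ, x.2) ∈ S then p κ x else none

/-- p is a condition of the forcing (ℙ₁)^β↾(κ+1): finite support made of cardinals in
Succ′ below κ, with columns p(λ⁺) ∈ Fn([λ,λ⁺) × min{β,F(λ⁺)}, 2, λ⁺) with rectangular
domain. -/
def IsP1beta (F : Card0 → Card0) (κ : Card0) (β : Ord0) (p : P1Raw) : Prop :=
  (supp1 p).Finite ∧
  (∀ κ' ∈ supp1 p, SuccPrime F κ' ∧ κ' < κ) ∧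
  (∀ κ' ∈ supp1 p, ∀ μ : Card0, Cardinal.aleph0 ≤ μ → κ' = Order.succ μ →
    (∀ x ∈ dom1 p κ', μ.ord ≤ x.1 ∧ x.1 < κ'.ord ∧ x.2 < (F κ').ord ∧ x.2 < β) ∧
    SetCardLT (dom1 p κ') κ' ∧
    (∀ x y, x ∈ dom1 p κ' → y ∈ dom1 p κ' → (x.1, y.2) ∈ dom1 p κ'))

/-- The projection ρ₁^β : ℙ₁ → (ℙ₁)^β↾(κ+1): keep only the columns below κ and, in
each column, the entries with second coordinate < β. -/
def rho1 (κ : Card0) (β : Ord0) (p : P1Raw) : P1Raw :=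
  fun κ' x => if κ' < κ ∧ x.2 < β then p κ' x else none

/-!
The content is the projection property. A condition `q ≤ ρ₁^β(p)` of the restricted forcing
lives below `κ` and `β`, where it extends `p`, so `q` and `p` agree on their common domain.
Their union is therefore a function; filling each column `λ⁺` to the rectangle spanned by its
domain keeps it inside `[λ, λ⁺) × F(λ⁺)` and of size `< λ⁺` (a product of two sets of size
`< λ⁺`). The result `p'` is a condition below `p` and `q`, so `ρ₁^β(p') ≤ ρ₁^β(q) = q`.
-/

section SetCardLT

variable {α : Type 1} {κ : Card0}

lemma setCardLT_mono {S T : Set α} (h : S ⊆ T) (hT : SetCardLT T κ) : SetCardLT S κ :=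
  (Cardinal.mk_le_mk_of_subset h).trans_lt hT

lemma setCardLT_empty (hκ : Cardinal.aleph0 ≤ κ) : SetCardLT (∅ : Set α) κ := by
  rw [SetCardLT, Cardinal.mk_eq_zero]
  exact Cardinal.aleph0_pos.trans_le (Cardinal.aleph0_le_lift.2 hκ)

lemma setCardLT_union {S T : Set α} (hκ : Cardinal.aleph0 ≤ κ)
    (hS : SetCardLT S κ) (hT : SetCardLT T κ) : SetCardLT (S ∪ T) κ :=
  (Cardinal.mk_union_le S T).trans_lt
    (Cardinal.add_lt_of_lt (Cardinal.aleph0_le_lift.2 hκ) hS hT)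

end SetCardLT

section RectHull

variable {α β : Type*}

def rectHull (D : Set (α × β)) : Set (α × β) := (Prod.fst '' D) ×ˢ (Prod.snd '' D)

lemma subset_rectHull (D : Set (α × β)) : D ⊆ rectHull D :=
  fun x hx => ⟨⟨x, hx, rfl⟩, ⟨x, hx, rfl⟩⟩

lemma rectHull_subset_prod {D : Set (α × β)} {A : Set α} {B : Set β} (h : D ⊆ A ×ˢ B) :
    rectHull D ⊆ A ×ˢ B :=
  Set.prod_mono (by rintro _ ⟨x, hx, rfl⟩; exact (h hx).1)
    (by rintro _ ⟨x, hx, rfl⟩; exact (h hx).2)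

lemma mk_mem_rectHull {D : Set (α × β)} {x y : α × β} (hx : x ∈ rectHull D)
    (hy : y ∈ rectHull D) : (x.1, y.2) ∈ rectHull D :=
  ⟨hx.1, hy.2⟩

lemma rectHull_nonempty_iff {D : Set (α × β)} : (rectHull D).Nonempty ↔ D.Nonempty := by
  simp [rectHull, Set.prod_nonempty_iff]

lemma setCardLT_rectHull {D : Set (Ord0 × Ord0)} {κ : Card0} (hκ : Cardinal.aleph0 ≤ κ)
    (hD : SetCardLT D κ) : SetCardLT (rectHull D) κ := by
  have hmk : Cardinal.mk (rectHull D) =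
      Cardinal.mk (Prod.fst '' D) * Cardinal.mk (Prod.snd '' D) := by
    rw [rectHull, Cardinal.mk_congr (Equiv.Set.prod _ _), Cardinal.mk_prod,
      Cardinal.lift_id, Cardinal.lift_id]
  rw [SetCardLT, hmk]
  exact Cardinal.mul_lt_of_lt (Cardinal.aleph0_le_lift.2 hκ)
    (Cardinal.mk_image_le.trans_lt hD) (Cardinal.mk_image_le.trans_lt hD)

end RectHull

lemma le1_trans {p q r : P1Raw} (hpq : le1 p q) (hqr : le1 q r) : le1 p r :=
  fun κ x b h => hpq κ x b (hqr κ x b h)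

lemma mem_supp1_of_mem_dom1 {p : P1Raw} {κ : Card0} {x : Ord0 × Ord0} (hx : x ∈ dom1 p κ) :
    κ ∈ supp1 p :=
  ⟨x, hx⟩

lemma dom1_nonempty_iff {p : P1Raw} {κ : Card0} : (dom1 p κ).Nonempty ↔ κ ∈ supp1 p :=
  Iff.rfl

section IsP1

variable {F : Card0 → Card0} {p : P1Raw}

def box1 (F : Card0 → Card0) (μ : Card0) : Set (Ord0 × Ord0) :=
  Set.Ico μ.ord (Order.succ μ).ord ×ˢ Set.Iio (F (Order.succ μ)).ord

lemma mem_box1 {μ : Card0} {x : Ord0 × Ord0} :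
    x ∈ box1 F μ ↔ μ.ord ≤ x.1 ∧ x.1 < (Order.succ μ).ord ∧ x.2 < (F (Order.succ μ)).ord := by
  simp [box1, and_assoc]

lemma IsP1.dom1_subset_box1 (hp : IsP1 F p) {μ : Card0} (hμ : Cardinal.aleph0 ≤ μ) :
    dom1 p (Order.succ μ) ⊆ box1 F μ :=
  fun x hx => mem_box1.2 ((hp.2.2 _ (mem_supp1_of_mem_dom1 hx) μ hμ rfl).1 x hx)

lemma IsP1.setCardLT_dom1 (hp : IsP1 F p) {μ : Card0} (hμ : Cardinal.aleph0 ≤ μ) :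
    SetCardLT (dom1 p (Order.succ μ)) (Order.succ μ) := by
  by_cases h : Order.succ μ ∈ supp1 p
  · exact (hp.2.2 _ h μ hμ rfl).2.1
  · rw [← dom1_nonempty_iff, Set.not_nonempty_iff_eq_empty] at h
    rw [h]
    exact setCardLT_empty (hμ.trans (Order.le_succ μ))

lemma IsP1.mk_mem_dom1 (hp : IsP1 F p) {κ : Card0} {x y : Ord0 × Ord0}
    (hx : x ∈ dom1 p κ) (hy : y ∈ dom1 p κ) : (x.1, y.2) ∈ dom1 p κ := by
  obtain ⟨μ, hμ, hκ⟩ := (hp.2.1 κ (mem_supp1_of_mem_dom1 hx)).1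
  exact (hp.2.2 κ (mem_supp1_of_mem_dom1 hx) μ hμ hκ).2.2 x y hx hy

end IsP1

section Rho1

variable {F : Card0 → Card0} {κ : Card0} {β : Ord0}

lemma mem_dom1_rho1 {p : P1Raw} {κ' : Card0} {x : Ord0 × Ord0} :
    x ∈ dom1 (rho1 κ β p) κ' ↔ (κ' < κ ∧ x.2 < β) ∧ x ∈ dom1 p κ' := by
  change rho1 κ β p κ' x ≠ none ↔ _ ∧ p κ' x ≠ none
  unfold rho1
  split_ifs with h <;> simp [h]

lemma rho1_mono {p q : P1Raw} (h : le1 q p) : le1 (rho1 κ β q) (rho1 κ β p) := by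
  intro κ' x b hx
  simp only [rho1] at hx ⊢
  split_ifs at hx ⊢
  exact h κ' x b hx

lemma rho1_empty : rho1 κ β (fun _ _ => none) = fun _ _ => none := by
  funext κ' x
  simp [rho1]

lemma isP1beta_rho1 {p : P1Raw} (hp : IsP1 F p) : IsP1beta F κ β (rho1 κ β p) := by
  have hsupp : supp1 (rho1 κ β p) ⊆ supp1 p := fun κ' ⟨x, hx⟩ =>
    mem_supp1_of_mem_dom1 (mem_dom1_rho1.1 hx).2
  refine ⟨hp.1.subset hsupp, fun κ' ⟨x, hx⟩ => ⟨hp.2.1 κ' (hsupp ⟨x, hx⟩),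
    (mem_dom1_rho1.1 hx).1.1⟩, ?_⟩
  rintro κ' - μ hμ rfl
  refine ⟨fun x hx => ?_, ?_, fun x y hx hy => ?_⟩
  · obtain ⟨⟨-, hxβ⟩, hxp⟩ := mem_dom1_rho1.1 hx
    obtain ⟨h1, h2, h3⟩ := mem_box1.1 (hp.dom1_subset_box1 hμ hxp)
    exact ⟨h1, h2, h3, hxβ⟩
  · exact setCardLT_mono (fun x hx => (mem_dom1_rho1.1 hx).2) (hp.setCardLT_dom1 hμ)
  · obtain ⟨⟨hκ', -⟩, hxp⟩ := mem_dom1_rho1.1 hx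
    obtain ⟨⟨-, hyβ⟩, hyp⟩ := mem_dom1_rho1.1 hy
    exact mem_dom1_rho1.2 ⟨⟨hκ', hyβ⟩, hp.mk_mem_dom1 hxp hyp⟩

namespace IsP1beta

variable {r : P1Raw}

lemma isP1 (hr : IsP1beta F κ β r) : IsP1 F r := by
  refine ⟨hr.1, fun κ' h => (hr.2.1 κ' h).1, fun κ' h μ hμ hκ' => ?_⟩
  obtain ⟨hbox, hcard, hrect⟩ := hr.2.2 κ' h μ hμ hκ'
  exact ⟨fun x hx => ⟨(hbox x hx).1, (hbox x hx).2.1, (hbox x hx).2.2.1⟩, hcard, hrect⟩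

lemma lt_of_mem_dom1 (hr : IsP1beta F κ β r) {κ' : Card0} {x : Ord0 × Ord0}
    (hx : x ∈ dom1 r κ') : κ' < κ ∧ x.2 < β := by
  obtain ⟨⟨⟨μ, hμ, hκ'⟩, -⟩, hκ'κ⟩ := hr.2.1 κ' (mem_supp1_of_mem_dom1 hx)
  exact ⟨hκ'κ, ((hr.2.2 κ' (mem_supp1_of_mem_dom1 hx) μ hμ hκ').1 x hx).2.2.2⟩

lemma rho1_eq_self (hr : IsP1beta F κ β r) : rho1 κ β r = r := by
  funext κ' x
  by_cases h : κ' < κ ∧ x.2 < β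
  · simp [rho1, h]
  · simp only [rho1, if_neg h]
    by_contra hx
    exact h (hr.lt_of_mem_dom1 (Ne.symm hx))

lemma agree_of_le1_rho1 (hr : IsP1beta F κ β r) {p : P1Raw}
    (h : le1 r (rho1 κ β p)) {κ' : Card0} {x : Ord0 × Ord0}
    {b b' : Bool} (hrx : r κ' x = some b) (hpx : p κ' x = some b') : b = b' := by
  have hlt := hr.lt_of_mem_dom1 (show x ∈ dom1 r κ' by simp [dom1, hrx])
  have := h κ' x b' (by simp [rho1, hlt, hpx])
  rwa [hrx, Option.some_inj] at this

end IsP1beta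

end Rho1

section Amalgamation

variable {F : Card0 → Card0}

def merge1 (q p : P1Raw) : P1Raw := fun κ x => (q κ x).or (p κ x)

def fillRect1 (p : P1Raw) : P1Raw := fun κ x =>
  if x ∈ rectHull (dom1 p κ) then some ((p κ x).getD false) else none

lemma dom1_merge1 (q p : P1Raw) (κ : Card0) : dom1 (merge1 q p) κ = dom1 q κ ∪ dom1 p κ := by
  ext x
  change (q κ x).or (p κ x) ≠ none ↔ q κ x ≠ none ∨ p κ x ≠ none
  rw [ne_eq, Option.or_eq_none_iff, not_and_or]

lemma supp1_merge1 (q p : P1Raw) : supp1 (merge1 q p) = supp1 q ∪ supp1 p := by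
  ext κ
  simp only [← dom1_nonempty_iff, dom1_merge1, Set.union_nonempty, Set.mem_union]

lemma le1_merge1_left (q p : P1Raw) : le1 (merge1 q p) q := by
  intro κ x b h
  simp [merge1, h]

lemma le1_merge1_right {q p : P1Raw}
    (hqp : ∀ κ x b b', q κ x = some b → p κ x = some b' → b = b') : le1 (merge1 q p) p := by
  intro κ x b' hp
  rcases hq : q κ x with _ | b
  · simp [merge1, hq, hp]
  · simp [merge1, hq, hqp κ x b b' hq hp]

lemma dom1_fillRect1 (p : P1Raw) (κ : Card0) : dom1 (fillRect1 p) κ = rectHull (dom1 p κ) := by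
  ext x
  change fillRect1 p κ x ≠ none ↔ x ∈ rectHull (dom1 p κ)
  unfold fillRect1
  split_ifs with h <;> simp [h]

lemma supp1_fillRect1 (p : P1Raw) : supp1 (fillRect1 p) = supp1 p := by
  ext κ
  rw [← dom1_nonempty_iff, ← dom1_nonempty_iff, dom1_fillRect1, rectHull_nonempty_iff]

lemma le1_fillRect1 (p : P1Raw) : le1 (fillRect1 p) p := by
  intro κ x b h
  have hx : x ∈ rectHull (dom1 p κ) := subset_rectHull _ (by simp [dom1, h])
  simp [fillRect1, hx, h]

lemma isP1_fillRect1_merge1 {q p : P1Raw} (hq : IsP1 F q) (hp : IsP1 F p) :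
    IsP1 F (fillRect1 (merge1 q p)) := by
  rw [IsP1, supp1_fillRect1, supp1_merge1]
  refine ⟨hq.1.union hp.1, ?_, ?_⟩
  · rintro κ (h | h)
    exacts [hq.2.1 κ h, hp.2.1 κ h]
  rintro κ - μ hμ rfl
  rw [dom1_fillRect1, dom1_merge1]
  refine ⟨fun x hx => mem_box1.1 ?_, ?_, fun x y hx hy => mk_mem_rectHull hx hy⟩
  · exact rectHull_subset_prod
      (Set.union_subset (hq.dom1_subset_box1 hμ) (hp.dom1_subset_box1 hμ)) hx
  · have hκ : Cardinal.aleph0 ≤ Order.succ μ := hμ.trans (Order.le_succ μ)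
    exact setCardLT_rectHull hκ
      (setCardLT_union hκ (hq.setCardLT_dom1 hμ) (hp.setCardLT_dom1 hμ))

end Amalgamation

theorem statement15_general (F : Card0 → Card0) (κ : Card0) (β : Ord0) :
    -- ρ₁^β maps ℙ₁ into (ℙ₁)^β↾(κ+1)
    (∀ p, IsP1 F p → IsP1beta F κ β (rho1 κ β p)) ∧
    -- order-preserving
    (∀ p q, IsP1 F p → IsP1 F q → le1 q p → le1 (rho1 κ β q) (rho1 κ β p)) ∧
    -- surjective
    (∀ r, IsP1beta F κ β r → ∃ p, IsP1 F p ∧ rho1 κ β p = r) ∧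
    -- empty condition to empty condition
    (rho1 κ β (fun _ _ => none) = (fun _ _ => none)) ∧
    -- projection property
    (∀ p, IsP1 F p → ∀ q, IsP1beta F κ β q → le1 q (rho1 κ β p) →
        ∃ p', IsP1 F p' ∧ le1 p' p ∧ le1 (rho1 κ β p') q) := by
  refine ⟨fun p hp => isP1beta_rho1 hp, fun p q _ _ h => rho1_mono h,
    fun r hr => ⟨r, hr.isP1, hr.rho1_eq_self⟩, rho1_empty, ?_⟩
  intro p hp q hq hqp
  refine ⟨fillRect1 (merge1 q p), isP1_fillRect1_merge1 hq.isP1 hp, ?_, ?_⟩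
  · exact le1_trans (le1_fillRect1 _)
      (le1_merge1_right fun _ _ _ _ => hq.agree_of_le1_rho1 hqp)
  · have := rho1_mono (κ := κ) (β := β) (le1_trans (le1_fillRect1 _) (le1_merge1_left q p))
    rwa [hq.rho1_eq_self] at this

/-- ρ₁^β : ℙ₁ → (ℙ₁)^β↾(κ+1) is a projection of forcing posets:
order-preserving, surjective, maps the empty condition to the empty condition, and
every q ≤ ρ₁^β(p) can be reached from below p. -/
theorem statement15 (F : Card0 → Card0)
    (hF : ∀ κ, Cardinal.aleph0 ≤ κ → Order.succ (Order.succ κ) ≤ F κ)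
    (hFmono : ∀ κ lam, Cardinal.aleph0 ≤ κ → κ ≤ lam → F κ ≤ F lam)
    (κ : Card0) (hκ : IsLimitCard κ) (β : Ord0) :
    -- ρ₁^β maps ℙ₁ into (ℙ₁)^β↾(κ+1)
    (∀ p, IsP1 F p → IsP1beta F κ β (rho1 κ β p)) ∧
    -- order-preserving
    (∀ p q, IsP1 F p → IsP1 F q → le1 q p → le1 (rho1 κ β q) (rho1 κ β p)) ∧
    -- surjective
    (∀ r, IsP1beta F κ β r → ∃ p, IsP1 F p ∧ rho1 κ β p = r) ∧
    -- empty condition to empty condition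
    (rho1 κ β (fun _ _ => none) = (fun _ _ => none)) ∧
    -- projection property
    (∀ p, IsP1 F p → ∀ q, IsP1beta F κ β q → le1 q (rho1 κ β p) →
        ∃ p', IsP1 F p' ∧ le1 p' p ∧ le1 (rho1 κ β p') q) :=
  statement15_general F κ β
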